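/- Let N ≥ 1 and let ρ be a separable state on ℋ_A ⊗ ℋ_B. Then there exists an operator σ ∈ 𝒮̃^N with tr σ = 1 such that ‖ρ − σ‖₁ ≤ 2(d−1)/(N+d). (Concretely, σ = (N/(N+d)) ρ + (1/(N+d)) ρ_A ⊗ 𝕀_B works, where ρ_A = tr_B ρ.) -/

import Mathlib

open Matrix MeasureTheory
open scoped Kronecker BigOperators ENNReal ComplexOrder

noncomputable section

namespace SepPaper

/-- The rank-one operator `|ψ⟩⟨ψ|`. -/
def proj {n : Type*} (ψ : n → ℂ) : Matrix n n ℂ := Matrix.vecMulVec ψ (star ψ)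

/-- `Λ` is a separable operator on `ℂ^{dA} ⊗ ℂ^{d}`: a finite conical combination of
pure product operators `|ψ⟩⟨ψ| ⊗ |φ⟩⟨φ|`. -/
def IsSeparable (dA d : ℕ) (Λ : Matrix (Fin dA × Fin d) (Fin dA × Fin d) ℂ) : Prop :=
  ∃ (k : ℕ) (c : Fin k → ℝ) (ψ : Fin k → (Fin dA → ℂ)) (φ : Fin k → (Fin d → ℂ)),
    (∀ i, 0 ≤ c i) ∧
    Λ = ∑ i, (c i : ℂ) • (proj (ψ i) ⊗ₖ proj (φ i))

/-- Partial trace over the `B` system. -/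
def trB {dA d : ℕ} (M : Matrix (Fin dA × Fin d) (Fin dA × Fin d) ℂ) :
    Matrix (Fin dA) (Fin dA) ℂ :=
  fun a a' => ∑ b : Fin d, M (a, b) (a', b)

/-- Index type of `ℋ_A ⊗ ℋ_B ⊗ ℋ_B^{⊗(N-1)} = ℋ_A ⊗ ℋ_B^{⊗N}` (for `N ≥ 1`). -/
abbrev ExtIdx (dA d N : ℕ) := Fin dA × Fin d × (Fin (N - 1) → Fin d)

/-- The orthogonal projector onto the symmetric subspace of `(ℂ^d)^{⊗N}`,
realized as the average of all permutation operators. -/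
def symProj (d N : ℕ) : Matrix (Fin N → Fin d) (Fin N → Fin d) ℂ :=
  (N.factorial : ℂ)⁻¹ •
    ∑ π : Equiv.Perm (Fin N), Matrix.of (fun f g => if (fun i => g (π i)) = f then (1 : ℂ) else 0)

/-- Identification of `ℂ^d ⊗ (ℂ^d)^{⊗(N-1)}` with `(ℂ^d)^{⊗((N-1)+1)}`. -/
def bEquiv (d N : ℕ) : (Fin d × (Fin (N - 1) → Fin d)) ≃ (Fin (N - 1 + 1) → Fin d) :=
  Fin.consEquiv (fun _ => Fin d)

/-- The symmetric projector on the `N = (N-1)+1` copies of `ℂ^d`,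
viewed on the index type `Fin d × (Fin (N-1) → Fin d)`. -/
def symProjB (d N : ℕ) : Matrix (Fin d × (Fin (N - 1) → Fin d)) (Fin d × (Fin (N - 1) → Fin d)) ℂ :=
  Matrix.reindex (bEquiv d N).symm (bEquiv d N).symm (symProj d (N - 1 + 1))

/-- Partial trace over the last `N-1` copies of `ℋ_B`. -/
def ptraceExt {dA d N : ℕ} (M : Matrix (ExtIdx dA d N) (ExtIdx dA d N) ℂ) :
    Matrix (Fin dA × Fin d) (Fin dA × Fin d) ℂ :=
  fun p q => ∑ g : Fin (N - 1) → Fin d, M (p.1, p.2, g) (q.1, q.2, g)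

/-- Membership in `𝒮^N`: existence of a positive semidefinite Bose-symmetric
`N`-extension. -/
def MemSN (dA d N : ℕ) (Λ : Matrix (Fin dA × Fin d) (Fin dA × Fin d) ℂ) : Prop :=
  ∃ Λext : Matrix (ExtIdx dA d N) (ExtIdx dA d N) ℂ,
    Λext.PosSemidef ∧ ptraceExt Λext = Λ ∧
    Λext * ((1 : Matrix (Fin dA) (Fin dA) ℂ) ⊗ₖ symProjB d N) = Λext

/-- Partial transpose of an operator on `ℋ_A ⊗ ℋ_B^{⊗N}` w.r.t. the bipartition
`(A and the first ⌈N/2⌉ copies of B) | (the last ⌊N/2⌋ copies of B)`.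
Copy `0` of `B` is the explicit factor and the extra copy `i : Fin (N-1)` is copy
`i+1`; copy `j` is transposed iff `⌈N/2⌉ = (N+1)/2 ≤ j`. -/
def pt {dA d N : ℕ} (M : Matrix (ExtIdx dA d N) (ExtIdx dA d N) ℂ) :
    Matrix (ExtIdx dA d N) (ExtIdx dA d N) ℂ :=
  fun p q =>
    M (p.1, p.2.1, fun i => if (N + 1) / 2 ≤ (i : ℕ) + 1 then q.2.2 i else p.2.2 i)
      (q.1, q.2.1, fun i => if (N + 1) / 2 ≤ (i : ℕ) + 1 then p.2.2 i else q.2.2 i)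

/-- Membership in `𝒮_p^N`: existence of a positive semidefinite Bose-symmetric
`N`-extension which is moreover PPT w.r.t. the bipartition
`A B^{⌈N/2⌉} | B^{⌊N/2⌋}`. -/
def MemSNp (dA d N : ℕ) (Λ : Matrix (Fin dA × Fin d) (Fin dA × Fin d) ℂ) : Prop :=
  ∃ Λext : Matrix (ExtIdx dA d N) (ExtIdx dA d N) ℂ,
    Λext.PosSemidef ∧ ptraceExt Λext = Λ ∧
    Λext * ((1 : Matrix (Fin dA) (Fin dA) ℂ) ⊗ₖ symProjB d N) = Λext ∧
    (pt Λext).PosSemidef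

/-- Membership in `𝒮̃^N = {(N/(N+d)) σ + (1/(N+d)) σ_A ⊗ 𝕀_B : σ ∈ 𝒮^N}`. -/
def MemStildeN (dA d N : ℕ) (Λ : Matrix (Fin dA × Fin d) (Fin dA × Fin d) ℂ) : Prop :=
  ∃ σ, MemSN dA d N σ ∧
    Λ = ((N : ℂ) / ((N : ℂ) + d)) • σ +
        (1 / ((N : ℂ) + d)) • (trB σ ⊗ₖ (1 : Matrix (Fin d) (Fin d) ℂ))

/-- The Jacobi polynomial `P_n^{(α,β)}` (for natural parameters `α, β`). -/
def jacobiP (n α β : ℕ) (x : ℝ) : ℝ :=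
  ∑ s ∈ Finset.range (n + 1),
    (Nat.choose (n + α) (n - s) : ℝ) * (Nat.choose (n + β) s : ℝ) *
      ((x - 1) / 2) ^ s * ((x + 1) / 2) ^ (n - s)

/-- `ε_N = (d/(2(d-1))) · min {1 - x : P_{⌊N/2⌋+1}^{(d-2, N mod 2)}(x) = 0}`. -/
def epsN (d N : ℕ) : ℝ :=
  ((d : ℝ) / (2 * ((d : ℝ) - 1))) *
    sInf {y : ℝ | ∃ x : ℝ, y = 1 - x ∧ jacobiP (N / 2 + 1) (d - 2) (N % 2) x = 0}

/-- Membership in `𝒮̃_p^N = {(1-ε_N) σ + ε_N σ_A ⊗ 𝕀_B/d : σ ∈ 𝒮_p^N}`. -/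
def MemStildeNp (dA d N : ℕ) (Λ : Matrix (Fin dA × Fin d) (Fin dA × Fin d) ℂ) : Prop :=
  ∃ σ, MemSNp dA d N σ ∧
    Λ = ((1 : ℂ) - (epsN d N : ℂ)) • σ +
        ((epsN d N : ℂ) / d) • (trB σ ⊗ₖ (1 : Matrix (Fin d) (Fin d) ℂ))

/-- The trace norm `‖Z‖₁ = tr √(Z Zᴴ)`. -/
def traceNorm {n : Type*} [Fintype n] [DecidableEq n] (Z : Matrix n n ℂ) : ℝ :=
  (((Matrix.posSemidef_self_mul_conjTranspose Z).1.eigenvectorUnitary : Matrix n n ℂ) *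
      Matrix.diagonal (((↑) : ℝ → ℂ) ∘ (√·) ∘ (Matrix.posSemidef_self_mul_conjTranspose Z).1.eigenvalues) *
      (star (Matrix.posSemidef_self_mul_conjTranspose Z).1.eigenvectorUnitary : Matrix n n ℂ)).trace.re

/-- The operator norm `‖Z‖_∞` (largest singular value), as the norm of the induced
operator on Euclidean space. -/
def opNorm {n : Type*} [Fintype n] [DecidableEq n] (Z : Matrix n n ℂ) : ℝ :=
  ‖LinearMap.toContinuousLinearMap (Matrix.toEuclideanLin Z)‖

/-- `(|φ⟩⟨φ|)^{⊗N}` on `ℋ_B^{⊗N} = ℋ_B ⊗ ℋ_B^{⊗(N-1)}`. -/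
def projPowExt {d : ℕ} (N : ℕ) (φ : Fin d → ℂ) :
    Matrix (Fin d × (Fin (N - 1) → Fin d)) (Fin d × (Fin (N - 1) → Fin d)) ℂ :=
  fun p q => proj φ p.1 q.1 * ∏ i, proj φ (p.2 i) (q.2 i)

/-- The optimal fidelity `F = sup {tr(ρ Λ) : Λ ∈ 𝒮, tr_B Λ = 𝕀_A}`. -/
def fid (dA d : ℕ) (ρ : Matrix (Fin dA × Fin d) (Fin dA × Fin d) ℂ) : ℝ :=
  sSup {r : ℝ | ∃ Λ, IsSeparable dA d Λ ∧ trB Λ = 1 ∧ r = ((ρ * Λ).trace).re}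

/-- `F̃^N = sup {tr(ρ Λ) : Λ ∈ 𝒮̃^N, tr_B Λ = 𝕀_A}`. -/
def fidTildeN (dA d N : ℕ) (ρ : Matrix (Fin dA × Fin d) (Fin dA × Fin d) ℂ) : ℝ :=
  sSup {r : ℝ | ∃ Λ, MemStildeN dA d N Λ ∧ trB Λ = 1 ∧ r = ((ρ * Λ).trace).re}

/-- `F̃_p^N = sup {tr(ρ Λ) : Λ ∈ 𝒮̃_p^N, tr_B Λ = 𝕀_A}`. -/
def fidTildeNp (dA d N : ℕ) (ρ : Matrix (Fin dA × Fin d) (Fin dA × Fin d) ℂ) : ℝ :=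
  sSup {r : ℝ | ∃ Λ, MemStildeNp dA d N Λ ∧ trB Λ = 1 ∧ r = ((ρ * Λ).trace).re}

/-- Robustness relative to a set `T` of operators:
`R_T(ρ) = inf {tr σ : σ ∈ T, ρ + σ ∈ T}` (with `inf ∅ = +∞`). -/
def rob {dA d : ℕ} (T : Set (Matrix (Fin dA × Fin d) (Fin dA × Fin d) ℂ))
    (ρ : Matrix (Fin dA × Fin d) (Fin dA × Fin d) ℂ) : ℝ≥0∞ :=
  sInf {t : ℝ≥0∞ | ∃ σ ∈ T, ρ + σ ∈ T ∧ t = ENNReal.ofReal ((σ.trace).re)}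

/-!
For a separable `ρ = ∑ cᵢ |ψᵢ⟩⟨ψᵢ| ⊗ |φᵢ⟩⟨φᵢ|`, the operator
`∑ cᵢ ‖φᵢ‖^{-2(N-1)} |ψᵢ⟩⟨ψᵢ| ⊗ (|φᵢ⟩⟨φᵢ|)^{⊗N}` is a positive Bose-symmetric extension of `ρ`,
so `ρ ∈ 𝒮^N` and `σ ∈ 𝒮̃^N`. Moreover
`ρ - σ = ((d-1)/(N+d)) ρ - (1/(N+d)) (ρ_A ⊗ 𝕀_B - ρ)` is a difference of two positive operators,
the second one by the reduction criterion `ρ ≤ ρ_A ⊗ 𝕀_B` (it holds for product states because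
`P ≤ tr(P) 𝕀` for `P ≥ 0`). Both have trace `(d-1)/(N+d)`, and `‖P - Q‖₁ ≤ tr P + tr Q` for
positive `P` and `Q`.
-/

section TraceNorm

variable {n : Type*} [Fintype n] [DecidableEq n]

theorem traceNorm_eq_sum_abs_eigenvalues {Z : Matrix n n ℂ} (hZ : Z.IsHermitian) :
    traceNorm Z = ∑ i, |hZ.eigenvalues i| := by
  have hZZ := (Matrix.posSemidef_self_mul_conjTranspose Z).1
  -- `traceNorm Z` is the trace of `√(Z Zᴴ) = √(Z ^ 2) = |Z|`, computed by functional calculus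
  rw [traceNorm, show ((hZZ.eigenvectorUnitary : Matrix n n ℂ) *
    Matrix.diagonal (((↑) : ℝ → ℂ) ∘ (√·) ∘ hZZ.eigenvalues) *
    (star hZZ.eigenvectorUnitary : Matrix n n ℂ)) = hZZ.cfc Real.sqrt from rfl,
    ← hZZ.cfc_eq, hZ.eq, ← pow_two, show cfc Real.sqrt (Z ^ 2) = cfc (fun x => √(x ^ 2)) Z
      from (cfc_comp_pow Real.sqrt 2 Z (ha := hZ)).symm]
  simp_rw [Real.sqrt_sq_eq_abs]
  rw [hZ.cfc_eq, Matrix.IsHermitian.cfc, Unitary.conjStarAlgAut_apply, Matrix.trace_mul_cycle,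
    Unitary.coe_star_mul_self, Matrix.one_mul, Matrix.trace_diagonal]
  simp

theorem traceNorm_sub_le {A B : Matrix n n ℂ} (hA : A.PosSemidef) (hB : B.PosSemidef) :
    traceNorm (A - B) ≤ A.trace.re + B.trace.re := by
  have hZ := hA.1.sub hB.1
  set U : Matrix n n ℂ := (hZ.eigenvectorUnitary : Matrix n n ℂ)
  have hdiag : star U * (A - B) * U = diagonal (RCLike.ofReal ∘ hZ.eigenvalues) := by
    simpa using hZ.conjStarAlgAut_star_eigenvectorUnitary
  have htrace (M : Matrix n n ℂ) : (star U * M * U).trace = M.trace := by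
    rw [trace_mul_cycle, mem_unitaryGroup_iff.mp hZ.eigenvectorUnitary.2, Matrix.one_mul]
  rw [traceNorm_eq_sum_abs_eigenvalues hZ, ← htrace A, ← htrace B, trace, trace, Complex.re_sum,
    Complex.re_sum, ← Finset.sum_add_distrib]
  refine Finset.sum_le_sum fun i _ => ?_
  have hi : hZ.eigenvalues i = ((star U * A * U) i i).re - ((star U * B * U) i i).re := by
    have := congrFun (congrFun hdiag i) i
    rw [Matrix.mul_sub, Matrix.sub_mul, Matrix.sub_apply, diagonal_apply_eq] at this
    simpa using congrArg Complex.re this.symm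
  have ha : 0 ≤ ((star U * A * U) i i).re :=
    (Complex.nonneg_iff.mp ((hA.conjTranspose_mul_mul_same U).diag_nonneg (i := i))).1
  have hb : 0 ≤ ((star U * B * U) i i).re :=
    (Complex.nonneg_iff.mp ((hB.conjTranspose_mul_mul_same U).diag_nonneg (i := i))).1
  rw [hi, abs_sub_le_iff, diag_apply, diag_apply]
  constructor <;> linarith

end TraceNorm

open Unitary in
theorem _root_.Matrix.PosSemidef.posSemidef_trace_smul_one_sub {n : Type*} [Fintype n]
    [DecidableEq n] {A : Matrix n n ℂ} (hA : A.PosSemidef) :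
    (A.trace • (1 : Matrix n n ℂ) - A).PosSemidef := by
  set ev := hA.1.eigenvalues
  have hdiag : A.trace • (1 : Matrix n n ℂ) - diagonal (RCLike.ofReal ∘ ev) =
      diagonal fun i => ((∑ j, ev j - ev i : ℝ) : ℂ) := by
    rw [hA.1.trace_eq_sum_eigenvalues, smul_one_eq_diagonal, diagonal_sub]
    simp [ev]
  have key : A.trace • (1 : Matrix n n ℂ) - A = conjStarAlgAut ℂ _ hA.1.eigenvectorUnitary
      (diagonal fun i => ((∑ j, ev j - ev i : ℝ) : ℂ)) := by
    rw [← hdiag, map_sub, map_smul, map_one, ← hA.1.spectral_theorem]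
  rw [key, conjStarAlgAut_apply, isUnit_coe.posSemidef_star_right_conjugate_iff,
    posSemidef_diagonal_iff]
  intro i
  rw [Complex.zero_le_real, sub_nonneg]
  exact Finset.single_le_sum (fun j _ => hA.eigenvalues_nonneg j) (Finset.mem_univ i)

theorem posSemidef_proj {n : Type*} [Fintype n] (ψ : n → ℂ) : (proj ψ).PosSemidef :=
  Matrix.posSemidef_vecMulVec_self_star ψ

theorem proj_ofReal_sqrt_smul {n : Type*} {c : ℝ} (hc : 0 ≤ c) (ψ : n → ℂ) :
    proj ((√c : ℂ) • ψ) = (c : ℂ) • proj ψ := by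
  ext i j
  simp only [proj, vecMulVec_apply, Pi.smul_apply, Pi.star_apply, star_smul, smul_eq_mul,
    Matrix.smul_apply, Complex.star_def, Complex.conj_ofReal]
  rw [mul_mul_mul_comm, ← Complex.ofReal_mul, Real.mul_self_sqrt hc]

variable {dA d : ℕ}

@[simp]
theorem trB_zero : trB (0 : Matrix (Fin dA × Fin d) (Fin dA × Fin d) ℂ) = 0 := by
  ext; simp [trB]

theorem trB_add (M M' : Matrix (Fin dA × Fin d) (Fin dA × Fin d) ℂ) :
    trB (M + M') = trB M + trB M' := by
  ext; simp [trB, Finset.sum_add_distrib]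

theorem trB_kronecker (A : Matrix (Fin dA) (Fin dA) ℂ) (B : Matrix (Fin d) (Fin d) ℂ) :
    trB (A ⊗ₖ B) = B.trace • A := by
  ext; simp [trB, trace, Finset.mul_sum, mul_comm]

theorem trace_trB (M : Matrix (Fin dA × Fin d) (Fin dA × Fin d) ℂ) : (trB M).trace = M.trace := by
  simp [trB, trace, Fintype.sum_prod_type]

theorem trace_trB_kronecker_one (M : Matrix (Fin dA × Fin d) (Fin dA × Fin d) ℂ) :
    (trB M ⊗ₖ (1 : Matrix (Fin d) (Fin d) ℂ)).trace = d * M.trace := by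
  rw [trace_kronecker, trace_trB, trace_one, Fintype.card_fin, mul_comm]

@[elab_as_elim]
theorem IsSeparable.induction {P : Matrix (Fin dA × Fin d) (Fin dA × Fin d) ℂ → Prop}
    (zero : P 0) (add : ∀ Λ Λ', P Λ → P Λ' → P (Λ + Λ'))
    (proj_kronecker_proj : ∀ ψ φ, P (proj ψ ⊗ₖ proj φ))
    {Λ : Matrix (Fin dA × Fin d) (Fin dA × Fin d) ℂ} (h : IsSeparable dA d Λ) : P Λ := by
  obtain ⟨k, c, ψ, φ, hc, rfl⟩ := h
  refine Finset.sum_induction _ P add zero fun i _ => ?_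
  rw [← smul_kronecker, ← proj_ofReal_sqrt_smul (hc i)]
  exact proj_kronecker_proj _ _

theorem IsSeparable.posSemidef {Λ : Matrix (Fin dA × Fin d) (Fin dA × Fin d) ℂ}
    (h : IsSeparable dA d Λ) : Λ.PosSemidef :=
  h.induction .zero (fun _ _ => .add) fun ψ φ => (posSemidef_proj ψ).kronecker (posSemidef_proj φ)

theorem IsSeparable.posSemidef_trB_kronecker_one_sub
    {Λ : Matrix (Fin dA × Fin d) (Fin dA × Fin d) ℂ} (h : IsSeparable dA d Λ) :
    (trB Λ ⊗ₖ (1 : Matrix (Fin d) (Fin d) ℂ) - Λ).PosSemidef := by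
  refine h.induction (by simpa using PosSemidef.zero) (fun Λ Λ' hΛ hΛ' => ?_) fun ψ φ => ?_
  · rw [trB_add, add_kronecker, add_sub_add_comm]
    exact hΛ.add hΛ'
  · have : trB (proj ψ ⊗ₖ proj φ) ⊗ₖ (1 : Matrix (Fin d) (Fin d) ℂ) - proj ψ ⊗ₖ proj φ =
        proj ψ ⊗ₖ ((proj φ).trace • (1 : Matrix (Fin d) (Fin d) ℂ) - proj φ) := by
      rw [sub_eq_iff_eq_add, ← kronecker_add, sub_add_cancel, trB_kronecker, smul_kronecker,
        kronecker_smul]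
    rw [this]
    exact (posSemidef_proj ψ).kronecker (posSemidef_proj φ).posSemidef_trace_smul_one_sub

theorem sum_prod_mul_symProj (M : ℕ) (χ : Fin d → ℂ) (g : Fin M → Fin d) :
    ∑ f : Fin M → Fin d, (∏ j, χ (f j)) * symProj d M f g = ∏ j, χ (g j) := by
  have hperm : ∀ π : Equiv.Perm (Fin M), ∏ j, χ (g (π j)) = ∏ j, χ (g j) := fun π =>
    Equiv.prod_comp π (fun j => χ (g j))
  simp only [symProj, Matrix.smul_apply, Matrix.sum_apply, of_apply, smul_eq_mul, Finset.mul_sum,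
    mul_ite, mul_one, mul_zero]
  rw [Finset.sum_comm]
  simp only [Finset.sum_ite_eq, Finset.mem_univ, if_true, hperm, Finset.sum_const,
    Finset.card_univ, Fintype.card_perm, Fintype.card_fin, nsmul_eq_mul]
  field_simp

def tensorPow (N : ℕ) (φ : Fin d → ℂ) : Fin d × (Fin (N - 1) → Fin d) → ℂ :=
  fun p => φ p.1 * ∏ j, φ (p.2 j)

variable {N : ℕ}

theorem tensorPow_eq_prod (φ : Fin d → ℂ) (p : Fin d × (Fin (N - 1) → Fin d)) :
    tensorPow N φ p = ∏ j, φ (bEquiv d N p j) := by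
  rw [Fin.prod_univ_succ]
  rfl

theorem star_tensorPow_vecMul_symProjB (φ : Fin d → ℂ) :
    star (tensorPow N φ) ᵥ* symProjB d N = star (tensorPow N φ) := by
  ext q
  rw [vecMul, dotProduct, ← (bEquiv d N).symm.sum_comp]
  simp only [symProjB, reindex_apply, submatrix_apply, Equiv.symm_symm, Equiv.apply_symm_apply,
    Pi.star_apply, tensorPow_eq_prod, star_prod]
  exact sum_prod_mul_symProj (N - 1 + 1) (fun b => star (φ b)) (bEquiv d N q)

theorem proj_tensorPow_mul_symProjB (φ : Fin d → ℂ) :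
    proj (tensorPow N φ) * symProjB d N = proj (tensorPow N φ) := by
  rw [proj, vecMulVec_mul, star_tensorPow_vecMul_symProjB]

theorem proj_tensorPow (φ : Fin d → ℂ) : proj (tensorPow N φ) = projPowExt N φ := by
  ext p q
  simp only [proj, projPowExt, tensorPow, vecMulVec_apply, Pi.star_apply, star_mul', star_prod,
    Finset.prod_mul_distrib]
  ring

theorem ptraceExt_add (M M' : Matrix (ExtIdx dA d N) (ExtIdx dA d N) ℂ) :
    ptraceExt (M + M') = ptraceExt M + ptraceExt M' := by
  ext; simp [ptraceExt, Finset.sum_add_distrib]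

theorem ptraceExt_smul (c : ℂ) (M : Matrix (ExtIdx dA d N) (ExtIdx dA d N) ℂ) :
    ptraceExt (c • M) = c • ptraceExt M := by
  ext; simp [ptraceExt, Finset.mul_sum]

theorem ptraceExt_kronecker_projPowExt (A : Matrix (Fin dA) (Fin dA) ℂ) (φ : Fin d → ℂ) :
    ptraceExt (A ⊗ₖ projPowExt N φ) = (proj φ).trace ^ (N - 1) • (A ⊗ₖ proj φ) := by
  ext p q
  simp only [ptraceExt, kroneckerMap_apply, projPowExt, Matrix.smul_apply, smul_eq_mul, trace,
    diag_apply, Fintype.sum_pow, ← Finset.mul_sum]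
  ring

theorem memSN_zero : MemSN dA d N 0 :=
  ⟨0, .zero, by ext; simp [ptraceExt], by simp⟩

theorem MemSN.add {Λ Λ' : Matrix (Fin dA × Fin d) (Fin dA × Fin d) ℂ} (h : MemSN dA d N Λ)
    (h' : MemSN dA d N Λ') : MemSN dA d N (Λ + Λ') := by
  obtain ⟨E, hE, rfl, hEsym⟩ := h
  obtain ⟨E', hE', rfl, hE'sym⟩ := h'
  exact ⟨E + E', hE.add hE', ptraceExt_add E E', by rw [Matrix.add_mul, hEsym, hE'sym]⟩

theorem memSN_proj_kronecker_proj (ψ : Fin dA → ℂ) (φ : Fin d → ℂ) :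
    MemSN dA d N (proj ψ ⊗ₖ proj φ) := by
  obtain rfl | hφ := eq_or_ne φ 0
  · simpa [proj] using memSN_zero
  set t := (proj φ).trace with ht_def
  have ht : t ≠ 0 := by
    rwa [ht_def, proj, trace_vecMulVec, dotProduct_comm, Ne, dotProduct_star_self_eq_zero]
  have ht₀ : 0 ≤ t := (posSemidef_proj φ).trace_nonneg
  refine ⟨(t⁻¹ ^ (N - 1)) • (proj ψ ⊗ₖ proj (tensorPow N φ)), ?_, ?_, ?_⟩
  · exact ((posSemidef_proj ψ).kronecker (posSemidef_proj _)).smul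
      (pow_nonneg (inv_nonneg_of_nonneg ht₀) _)
  · rw [ptraceExt_smul, proj_tensorPow, ptraceExt_kronecker_projPowExt, smul_smul, ← mul_pow,
      inv_mul_cancel₀ ht, one_pow, one_smul]
  · rw [smul_mul_assoc, ← mul_kronecker_mul, Matrix.mul_one, proj_tensorPow_mul_symProjB]

theorem IsSeparable.memSN {Λ : Matrix (Fin dA × Fin d) (Fin dA × Fin d) ℂ}
    (h : IsSeparable dA d Λ) : MemSN dA d N Λ :=
  h.induction memSN_zero (fun _ _ => .add) memSN_proj_kronecker_proj

theorem stmt0_general (dA d N : ℕ) (hd : 1 ≤ d)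
    (ρ : Matrix (Fin dA × Fin d) (Fin dA × Fin d) ℂ)
    (hρsep : IsSeparable dA d ρ) (hρtr : ρ.trace = 1) :
    ∃ σ : Matrix (Fin dA × Fin d) (Fin dA × Fin d) ℂ,
      σ = ((N : ℂ) / ((N : ℂ) + d)) • ρ +
          (1 / ((N : ℂ) + d)) • (trB ρ ⊗ₖ (1 : Matrix (Fin d) (Fin d) ℂ)) ∧
      MemStildeN dA d N σ ∧ σ.trace = 1 ∧
      traceNorm (ρ - σ) ≤ 2 * ((d : ℝ) - 1) / ((N : ℝ) + d) := by
  have hd' : (1 : ℝ) ≤ d := by exact_mod_cast hd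
  have hNd : (0 : ℝ) < N + d := by positivity
  have hNdC : (N : ℂ) + d ≠ 0 := by exact_mod_cast hNd.ne'
  set K := trB ρ ⊗ₖ (1 : Matrix (Fin d) (Fin d) ℂ)
  have hKtr : K.trace = d := by rw [trace_trB_kronecker_one, hρtr, mul_one]
  refine ⟨_, rfl, ⟨ρ, hρsep.memSN, rfl⟩, ?_, ?_⟩
  · rw [trace_add, trace_smul, trace_smul, hρtr, hKtr, smul_eq_mul, smul_eq_mul]
    field_simp
  set c : ℝ := 1 / (N + d) with hc_def
  have hc : 0 ≤ c := by positivity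
  have hsplit : ρ - ((N / (N + d) : ℂ) • ρ + (1 / (N + d) : ℂ) • K) =
      (((d - 1) * c : ℝ) : ℂ) • ρ - (c : ℂ) • (K - ρ) := by
    rw [hc_def]
    push_cast
    match_scalars <;> field_simp; ring
  rw [hsplit]
  refine (traceNorm_sub_le
    (hρsep.posSemidef.smul (Complex.zero_le_real.mpr (mul_nonneg (by linarith) hc)))
    (hρsep.posSemidef_trB_kronecker_one_sub.smul (Complex.zero_le_real.mpr hc))).trans_eq ?_
  rw [trace_smul, trace_smul, trace_sub, hρtr, hKtr, smul_eq_mul, smul_eq_mul, mul_one,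
    show (d : ℂ) - 1 = ((d - 1 : ℝ) : ℂ) by push_cast; ring, ← Complex.ofReal_mul,
    Complex.ofReal_re, Complex.ofReal_re]
  ring

/-- every separable state is within trace-norm distance
`2(d-1)/(N+d)` of a normalized element of `𝒮̃^N`; concretely
`σ = (N/(N+d)) ρ + (1/(N+d)) ρ_A ⊗ 𝕀_B` works. -/
theorem stmt0 (dA d N : ℕ) (hdA : 1 ≤ dA) (hd : 1 ≤ d) (hN : 1 ≤ N)
    (ρ : Matrix (Fin dA × Fin d) (Fin dA × Fin d) ℂ)
    (hρsep : IsSeparable dA d ρ) (hρtr : ρ.trace = 1) :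
    ∃ σ : Matrix (Fin dA × Fin d) (Fin dA × Fin d) ℂ,
      σ = ((N : ℂ) / ((N : ℂ) + d)) • ρ +
          (1 / ((N : ℂ) + d)) • (trB ρ ⊗ₖ (1 : Matrix (Fin d) (Fin d) ℂ)) ∧
      MemStildeN dA d N σ ∧ σ.trace = 1 ∧
      traceNorm (ρ - σ) ≤ 2 * ((d : ℝ) - 1) / ((N : ℝ) + d) :=
  stmt0_general dA d N hd ρ hρsep hρtr

end SepPaper
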